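/- arXiv:1204.5266 — 2 statements merged into one kernel-verified Lean document; each statement's English description precedes it below -/
import Mathlib

section
/- Let a be an even positive integer, b an odd positive integer, and k ≥ 2. Then the meander M of type a|a|⋯|a|b (with k−1 top blocks of size a followed by one top block of size b) and the meander M′ of type a|a|⋯|a|(b+2a) (with the same number k of top blocks) have the same number of connected components that are cycles and the same number of connected components that are paths; in particular the indices of M and M′ (given by 2·(number of cycle components) + (number of path components) − 1) are equal. -/
/-- The meander graph of type `a₁|a₂|⋯|a_ℓ` where `L = [a₁,…,a_ℓ]` is the list of top
block sizes, on vertex set `Fin (a₁ + ⋯ + a_ℓ)`, with top edges within each block and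
bottom edges `j ↔ n - 1 - j` coming from the single bottom block of size `n = L.sum`. -/
def meander (L : List ℕ) : SimpleGraph (Fin L.sum) :=
  SimpleGraph.fromRel (fun u v =>
    (∃ k : Fin L.length, ∃ i : ℕ, i < L.get k ∧
      (u : ℕ) = (L.take k.val).sum + i ∧
      (v : ℕ) = (L.take k.val).sum + (L.get k - 1 - i))
    ∨ ((u : ℕ) + (v : ℕ) = L.sum - 1))

/-- A connected component is a cycle component if every vertex in it has degree 2. -/
def SimpleGraph.IsCycleComponent {V : Type*} (G : SimpleGraph V)
    (c : G.ConnectedComponent) : Prop :=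
  ∀ v : V, G.connectedComponentMk v = c → (G.neighborSet v).ncard = 2

/-- The number of connected components of `G` that are cycles. -/
noncomputable def numCycleComponents {V : Type*} (G : SimpleGraph V) : ℕ :=
  Nat.card {c : G.ConnectedComponent // G.IsCycleComponent c}

/-- The number of connected components of `G` that are paths (i.e. not cycles). -/
noncomputable def numPathComponents {V : Type*} (G : SimpleGraph V) : ℕ :=
  Nat.card {c : G.ConnectedComponent // ¬ G.IsCycleComponent c}

/-- A meander is Frobenius if its graph is a single path, equivalently (as every vertex
has degree at most 2) connected and acyclic. -/
def IsFrobenius {V : Type*} (G : SimpleGraph V) : Prop :=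
  G.Connected ∧ G.IsAcyclic

/-!
Shifting by `a` embeds the meander `M` of type `a^(k-1) | b` into the meander `M'` of type
`a^(k-1) | (b+2a)`, and every arc of `M` goes to an arc of `M'` except the `a/2` top arcs of the
last `a`-block. Each of those becomes a path of length five whose four inner vertices lie in the
first `a`-block of `M'` and among its last `a` vertices. So `M'` is a subdivision of `M`:
folding the `2a` new vertices back onto the last `a`-block of `M` inverts the shift on
components, and degrees are preserved, because the new vertices have degree 2 and the shift
carries the two centres (the only vertices of degree 1) to the two centres.
-/

namespace SimpleGraph

variable {V W : Type*} {G : SimpleGraph V} {H : SimpleGraph W}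

theorem Reachable.map_of_adj (f : V → W) (hf : ∀ ⦃u v⦄, G.Adj u v → H.Reachable (f u) (f v))
    {u v : V} (h : G.Reachable u v) : H.Reachable (f u) (f v) := by
  obtain ⟨p⟩ := h
  induction p with
  | nil => rfl
  | cons hadj _ ih => exact (hf hadj).trans ih

theorem ncard_neighborSet_of_adj_iff [DecidableEq V] {v x y : V} (hxy : x ≠ y)
    (hadj : ∀ w, G.Adj v w ↔ w ≠ v ∧ (w = x ∨ w = y)) :
    (G.neighborSet v).ncard = if v = x ∨ v = y then 1 else 2 := by
  have hN : G.neighborSet v = {x, y} \ {v} := by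
    ext w
    simp [hadj, and_comm]
  rw [hN]
  by_cases hvx : v = x
  · subst hvx
    simp [Set.pair_sdiff_left hxy]
  by_cases hvy : v = y
  · subst hvy
    simp [Set.pair_sdiff_right hxy]
  rw [Set.sdiff_singleton_eq_self (by simp [hvx, hvy]), Set.ncard_pair hxy, if_neg (by tauto)]

structure ReachEquiv (G : SimpleGraph V) (H : SimpleGraph W) where
  toFun : V → W
  invFun : W → V
  reachable_toFun : ∀ ⦃u v⦄, G.Adj u v → H.Reachable (toFun u) (toFun v)
  reachable_invFun : ∀ ⦃x y⦄, H.Adj x y → G.Reachable (invFun x) (invFun y)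
  left_inv : Function.LeftInverse invFun toFun
  reachable_toFun_invFun : ∀ x, H.Reachable x (toFun (invFun x))

namespace ReachEquiv

variable (e : ReachEquiv G H)

def componentEquiv : G.ConnectedComponent ≃ H.ConnectedComponent where
  toFun := ConnectedComponent.lift (fun v => H.connectedComponentMk (e.toFun v))
    fun _ _ p _ => ConnectedComponent.sound (p.reachable.map_of_adj e.toFun e.reachable_toFun)
  invFun := ConnectedComponent.lift (fun x => G.connectedComponentMk (e.invFun x))
    fun _ _ p _ => ConnectedComponent.sound (p.reachable.map_of_adj e.invFun e.reachable_invFun)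
  left_inv := ConnectedComponent.ind fun v => by simp [e.left_inv v]
  right_inv := ConnectedComponent.ind fun x => by
    simpa using (ConnectedComponent.sound (e.reachable_toFun_invFun x)).symm

theorem componentEquiv_mk (v : V) :
    e.componentEquiv (G.connectedComponentMk v) = H.connectedComponentMk (e.toFun v) := rfl

theorem isCycleComponent_componentEquiv_iff
    (hdeg : ∀ v, (H.neighborSet (e.toFun v)).ncard = (G.neighborSet v).ncard)
    (hdeg₂ : ∀ x ∉ Set.range e.toFun, (H.neighborSet x).ncard = 2)
    (c : G.ConnectedComponent) :
    H.IsCycleComponent (e.componentEquiv c) ↔ G.IsCycleComponent c := by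
  refine ⟨fun hc v hv => ?_, fun hc x hx => ?_⟩
  · rw [← hdeg]
    exact hc _ (by rw [← hv, componentEquiv_mk])
  · by_cases hrange : x ∈ Set.range e.toFun
    · obtain ⟨v, rfl⟩ := hrange
      rw [hdeg]
      exact hc v (e.componentEquiv.injective (by rw [componentEquiv_mk, hx]))
    · exact hdeg₂ x hrange

theorem numCycleComponents_eq
    (hdeg : ∀ v, (H.neighborSet (e.toFun v)).ncard = (G.neighborSet v).ncard)
    (hdeg₂ : ∀ x ∉ Set.range e.toFun, (H.neighborSet x).ncard = 2) :
    numCycleComponents G = numCycleComponents H :=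
  Nat.card_congr <| e.componentEquiv.subtypeEquiv fun c =>
    (e.isCycleComponent_componentEquiv_iff hdeg hdeg₂ c).symm

theorem numPathComponents_eq
    (hdeg : ∀ v, (H.neighborSet (e.toFun v)).ncard = (G.neighborSet v).ncard)
    (hdeg₂ : ∀ x ∉ Set.range e.toFun, (H.neighborSet x).ncard = 2) :
    numPathComponents G = numPathComponents H :=
  Nat.card_congr <| e.componentEquiv.subtypeEquiv fun c =>
    not_congr (e.isCycleComponent_componentEquiv_iff hdeg hdeg₂ c).symm

end ReachEquiv

end SimpleGraph

namespace Meander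

local notation "𝕄[" K ", " a ", " c "]" => meander (List.replicate K a ++ [c])
local notation "𝕍[" K ", " a ", " c "]" => Fin (List.sum (List.replicate K a ++ [c]))

def IsTopArc (K a c u v : ℕ) : Prop :=
  (∃ j < K, ∃ i < a, u = j * a + i ∧ v = j * a + (a - 1 - i)) ∨
    ∃ i < c, u = K * a + i ∧ v = K * a + (c - 1 - i)

variable {K a b c : ℕ}

theorem sum_replicate_append : (List.replicate K a ++ [c]).sum = K * a + c := by
  simp

theorem val_lt (v : 𝕍[K, a, c]) : (v : ℕ) < K * a + c :=
  lt_of_lt_of_eq v.isLt sum_replicate_append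

theorem exists_val_eq {x : ℕ} (hx : x < K * a + c) : ∃ v : 𝕍[K, a, c], (v : ℕ) = x :=
  ⟨⟨x, lt_of_lt_of_eq hx sum_replicate_append.symm⟩, rfl⟩

theorem IsTopArc.symm {u v : ℕ} (h : IsTopArc K a c u v) : IsTopArc K a c v u := by
  rcases h with ⟨j, hj, i, hi, rfl, rfl⟩ | ⟨i, hi, rfl, rfl⟩
  · exact Or.inl ⟨j, hj, a - 1 - i, by omega, rfl, by omega⟩
  · exact Or.inr ⟨c - 1 - i, by omega, rfl, by omega⟩

theorem isTopArc_iff_meander_rel {u v : ℕ} :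
    IsTopArc K a c u v ↔ ∃ k : Fin (List.replicate K a ++ [c]).length, ∃ i : ℕ,
      i < (List.replicate K a ++ [c]).get k ∧
      u = ((List.replicate K a ++ [c]).take k.val).sum + i ∧
      v = ((List.replicate K a ++ [c]).take k.val).sum +
        ((List.replicate K a ++ [c]).get k - 1 - i) := by
  constructor
  · rintro (⟨j, hj, i, hi, rfl, rfl⟩ | ⟨i, hi, rfl, rfl⟩)
    · refine ⟨⟨j, by simp only [List.length_append, List.length_replicate]; omega⟩, i, ?_⟩
      simp [List.take_append, Nat.sub_eq_zero_of_le hj.le, hj.le, hj, hi]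
    · exact ⟨⟨K, by simp⟩, i, by simp [hi]⟩
  · rintro ⟨⟨k, hk⟩, i, hi, rfl, rfl⟩
    simp only [List.length_append, List.length_replicate, List.length_singleton] at hk
    rcases Nat.lt_succ_iff_lt_or_eq.mp hk with hk | rfl
    · exact Or.inl ⟨k, hk, i, by simp_all [List.take_append, Nat.sub_eq_zero_of_le hk.le]⟩
    · exact Or.inr ⟨i, by simp_all⟩

theorem adj_iff {u v : 𝕍[K, a, c]} :
    𝕄[K, a, c].Adj u v ↔
      (u : ℕ) ≠ v ∧ (IsTopArc K a c u v ∨ (u : ℕ) + v = K * a + c - 1) := by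
  rw [meander, SimpleGraph.fromRel_adj, ← isTopArc_iff_meander_rel, ← isTopArc_iff_meander_rel,
    Fin.val_ne_iff]
  have hn : (List.replicate K a ++ [c]).sum = K * a + c := sum_replicate_append
  refine and_congr_right fun _ => ⟨?_, ?_⟩
  · rintro ((h | h) | (h | h))
    exacts [Or.inl h, Or.inr (by omega), Or.inl h.symm, Or.inr (by omega)]
  · rintro (h | h)
    exacts [Or.inl (Or.inl h), Or.inl (Or.inr (by omega))]

def topPartner (K a c u : ℕ) : ℕ :=
  if u < K * a then u / a * a + (a - 1 - u % a) else K * a + (c - 1 - (u - K * a))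

theorem IsTopArc.lt_left {u v : ℕ} (h : IsTopArc K a c u v) : u < K * a + c := by
  rcases h with ⟨j, hj, i, hi, rfl, -⟩ | ⟨i, hi, rfl, -⟩
  · nlinarith
  · omega

theorem isTopArc_iff_eq_topPartner (ha : 0 < a) {u v : ℕ} (hu : u < K * a + c) :
    IsTopArc K a c u v ↔ v = topPartner K a c u := by
  constructor
  · rintro (⟨j, hj, i, hi, rfl, rfl⟩ | ⟨i, hi, rfl, rfl⟩)
    · have hdiv : (j * a + i) / a = j := by
        rw [Nat.mul_comm, Nat.mul_add_div ha, Nat.div_eq_of_lt hi, Nat.add_zero]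
      have hmod : (j * a + i) % a = i := by
        rw [Nat.mul_comm, Nat.mul_add_mod, Nat.mod_eq_of_lt hi]
      have hlt : j * a + i < K * a := by nlinarith
      rw [topPartner, if_pos hlt, hdiv, hmod]
    · rw [topPartner, if_neg (by omega)]
      omega
  · rintro rfl
    unfold topPartner
    split_ifs with h
    · refine Or.inl ⟨u / a, Nat.div_lt_of_lt_mul (by rwa [mul_comm]), u % a, Nat.mod_lt _ ha,
        ?_, rfl⟩
      rw [mul_comm, Nat.div_add_mod]
    · exact Or.inr ⟨u - K * a, by omega, by omega, rfl⟩

theorem isTopArc_self_iff (hEa : Even a) {u : ℕ} :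
    IsTopArc K a c u u ↔ 2 * u + 1 = 2 * (K * a) + c := by
  obtain ⟨α, rfl⟩ := hEa
  constructor
  · rintro (⟨j, -, i, hi, rfl, h⟩ | ⟨i, hi, rfl, h⟩) <;> omega
  · intro h
    exact Or.inr ⟨u - K * (α + α), by omega, by omega, by omega⟩

theorem not_isTopArc_bottomPartner (ha : 0 < a) (hK : 0 < K) (hEa : Even a) (hOc : Odd c)
    {u : ℕ} (hu : u < K * a + c) : ¬ IsTopArc K a c u (K * a + c - 1 - u) := by
  obtain ⟨α, rfl⟩ := hEa
  obtain ⟨γ, rfl⟩ := hOc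
  have hKa : K * (α + α) = K * α + K * α := by ring
  rintro (⟨j, -, i, hi, rfl, h⟩ | ⟨i, hi, rfl, h⟩)
  · have hja : j * (α + α) = j * α + j * α := by ring
    omega
  · have : 0 < K * (α + α) := by positivity
    omega

theorem ncard_neighborSet (ha : 0 < a) (hK : 0 < K) (hEa : Even a) (hOc : Odd c)
    (v : 𝕍[K, a, c]) :
    (𝕄[K, a, c].neighborSet v).ncard =
      if 2 * (v : ℕ) + 1 = K * a + c ∨ 2 * (v : ℕ) + 1 = 2 * (K * a) + c then 1 else 2 := by
  have hv := val_lt v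
  obtain ⟨σv, hσv⟩ : ∃ x : 𝕍[K, a, c], (x : ℕ) = topPartner K a c v :=
    exists_val_eq ((isTopArc_iff_eq_topPartner ha hv).mpr rfl).symm.lt_left
  obtain ⟨τv, hτv⟩ : ∃ x : 𝕍[K, a, c], (x : ℕ) = K * a + c - 1 - v := exists_val_eq (by omega)
  have hστ : σv ≠ τv := fun h => not_isTopArc_bottomPartner ha hK hEa hOc hv <| by
    rw [isTopArc_iff_eq_topPartner ha hv, ← hσv, ← hτv, h]
  rw [SimpleGraph.ncard_neighborSet_of_adj_iff hστ]
  · refine if_congr ?_ rfl rfl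
    rw [Fin.ext_iff, Fin.ext_iff, hσv, ← isTopArc_iff_eq_topPartner ha hv, isTopArc_self_iff hEa]
    omega
  · intro w
    rw [adj_iff, isTopArc_iff_eq_topPartner ha hv, Fin.ext_iff, Fin.ext_iff]
    omega

/-- `x` and `y` are the images under `shift` of the ends of an arc of the last `a`-block of
`a^(K+1) | (c-2a)`; the path `x, x', i, a-1-i, y', y` replaces that arc. -/
theorem reachable_detour (hEa : Even a) (h2a : 2 * a ≤ c) {i : ℕ} (hi : i < a)
    {x y : 𝕍[K + 1, a, c]} (hx : (x : ℕ) = (K + 1) * a + i)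
    (hy : (y : ℕ) = (K + 1) * a + (a - 1 - i)) : 𝕄[K + 1, a, c].Reachable x y := by
  obtain ⟨α, hα⟩ := hEa
  have hKa := add_one_mul K a
  obtain ⟨x', hx'⟩ : ∃ v : 𝕍[K + 1, a, c], (v : ℕ) = (K + 1) * a + (c - 1 - i) :=
    exists_val_eq (by omega)
  obtain ⟨z, hz⟩ : ∃ v : 𝕍[K + 1, a, c], (v : ℕ) = i := exists_val_eq (by omega)
  obtain ⟨z', hz'⟩ : ∃ v : 𝕍[K + 1, a, c], (v : ℕ) = a - 1 - i := exists_val_eq (by omega)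
  obtain ⟨y', hy'⟩ : ∃ v : 𝕍[K + 1, a, c], (v : ℕ) = (K + 1) * a + (c - a + i) :=
    exists_val_eq (by omega)
  have e₁ : 𝕄[K + 1, a, c].Adj x x' :=
    adj_iff.mpr ⟨by omega, Or.inl (Or.inr ⟨i, by omega, hx, hx'⟩)⟩
  have e₂ : 𝕄[K + 1, a, c].Adj x' z := adj_iff.mpr ⟨by omega, Or.inr (by omega)⟩
  have e₃ : 𝕄[K + 1, a, c].Adj z z' :=
    adj_iff.mpr ⟨by omega, Or.inl (Or.inl ⟨0, by omega, i, hi, by omega, by omega⟩)⟩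
  have e₄ : 𝕄[K + 1, a, c].Adj z' y' := adj_iff.mpr ⟨by omega, Or.inr (by omega)⟩
  have e₅ : 𝕄[K + 1, a, c].Adj y' y :=
    adj_iff.mpr ⟨by omega, Or.inl (Or.inr ⟨c - a + i, by omega, hy', by omega⟩)⟩
  exact e₁.reachable.trans <| e₂.reachable.trans <| e₃.reachable.trans <| e₄.reachable.trans
    e₅.reachable

def shift (v : 𝕍[K + 1, a, b]) : 𝕍[K + 1, a, b + 2 * a] :=
  ⟨v + a, lt_of_lt_of_eq (by have := val_lt v; omega) sum_replicate_append.symm⟩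

/-- A left inverse of `shift`. The inner vertices of the detours (the first and the last `a`
vertices) go to the nearer end of the arc that their detour replaces. -/
def collapse (x : 𝕍[K + 1, a, b + 2 * a]) : 𝕍[K + 1, a, b] :=
  ⟨if (x : ℕ) < a then K * a + x
    else if (x : ℕ) < (K + 1) * a + b + a then x - a
    else K * a + ((K + 1) * a + b + 2 * a - 1 - x),
    lt_of_lt_of_eq (by have := val_lt x; have := add_one_mul K a; split_ifs <;> omega)
      sum_replicate_append.symm⟩

theorem shift_val (v : 𝕍[K + 1, a, b]) : (shift v : ℕ) = v + a := rfl

theorem collapse_val (x : 𝕍[K + 1, a, b + 2 * a]) :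
    (collapse x : ℕ) = if (x : ℕ) < a then K * a + x
      else if (x : ℕ) < (K + 1) * a + b + a then x - a
      else K * a + ((K + 1) * a + b + 2 * a - 1 - x) := rfl

theorem collapse_val_of_lt {x : 𝕍[K + 1, a, b + 2 * a]} (h : (x : ℕ) < a) :
    (collapse x : ℕ) = K * a + x := by
  rw [collapse_val, if_pos h]

theorem collapse_val_of_le_of_lt {x : 𝕍[K + 1, a, b + 2 * a]} (h₁ : a ≤ x)
    (h₂ : (x : ℕ) < (K + 1) * a + b + a) : (collapse x : ℕ) = x - a := by
  rw [collapse_val, if_neg (by omega), if_pos h₂]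

theorem collapse_val_of_le {x : 𝕍[K + 1, a, b + 2 * a]} (h : (K + 1) * a + b + a ≤ x) :
    (collapse x : ℕ) = K * a + ((K + 1) * a + b + 2 * a - 1 - x) := by
  rw [collapse_val, if_neg (by omega), if_neg (by omega)]

theorem collapse_shift (v : 𝕍[K + 1, a, b]) : collapse (shift v) = v := by
  ext
  have := val_lt v
  rw [collapse_val, shift_val, if_neg (by omega), if_pos (by omega), Nat.add_sub_cancel]

theorem shift_collapse {x : 𝕍[K + 1, a, b + 2 * a]} (h₁ : a ≤ x)
    (h₂ : (x : ℕ) < (K + 1) * a + b + a) : shift (collapse x) = x := by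
  ext
  rw [shift_val, collapse_val, if_neg (by omega), if_pos h₂]
  omega

theorem reachable_shift_of_adj (hEa : Even a) {u v : 𝕍[K + 1, a, b]}
    (h : 𝕄[K + 1, a, b].Adj u v) : 𝕄[K + 1, a, b + 2 * a].Reachable (shift u) (shift v) := by
  have hKa := add_one_mul K a
  rw [adj_iff] at h
  obtain ⟨hne, (⟨j, hj, i, hi, hu, hv⟩ | ⟨i, hi, hu, hv⟩) | hbot⟩ := h
  · rcases Nat.lt_succ_iff_lt_or_eq.mp hj with hj | rfl
    · have hja := add_one_mul j a
      have hjK : (j + 1) * a + a ≤ (K + 1) * a := by nlinarith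
      refine (adj_iff.mpr ?_).reachable
      simp only [shift_val]
      exact ⟨by omega, Or.inl (Or.inl ⟨j + 1, by omega, i, hi, by omega, by omega⟩)⟩
    · exact reachable_detour hEa (by omega) hi (by rw [shift_val]; omega)
        (by rw [shift_val]; omega)
  · refine (adj_iff.mpr ?_).reachable
    simp only [shift_val]
    exact ⟨by omega, Or.inl (Or.inr ⟨i + a, by omega, by omega, by omega⟩)⟩
  · refine (adj_iff.mpr ?_).reachable
    simp only [shift_val]
    exact ⟨by omega, Or.inr (by omega)⟩

theorem collapse_eq_of_adj_of_le {x y : 𝕍[K + 1, a, b + 2 * a]}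
    (h : 𝕄[K + 1, a, b + 2 * a].Adj x y) (hy : (K + 1) * a + b + a ≤ y) :
    collapse x = collapse y := by
  have hKa := add_one_mul K a
  have := val_lt x
  rw [adj_iff] at h
  obtain ⟨-, (⟨j, hj, i, hi, -, hjy⟩ | ⟨i, hi, hix, hiy⟩) | hbot⟩ := h
  · have hja := add_one_mul j a
    have hjK : (j + 1) * a ≤ (K + 1) * a := Nat.mul_le_mul_right a hj
    omega
  · ext
    rw [collapse_val_of_le_of_lt (by omega) (by omega), collapse_val_of_le hy]
    omega
  · ext
    rw [collapse_val_of_lt (by omega), collapse_val_of_le hy]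
    omega

theorem collapse_eq_or_adj_of_adj {x y : 𝕍[K + 1, a, b + 2 * a]}
    (h : 𝕄[K + 1, a, b + 2 * a].Adj x y) :
    collapse x = collapse y ∨ 𝕄[K + 1, a, b].Adj (collapse x) (collapse y) := by
  by_cases hy : (K + 1) * a + b + a ≤ y
  · exact Or.inl (collapse_eq_of_adj_of_le h hy)
  by_cases hx : (K + 1) * a + b + a ≤ x
  · exact Or.inl (collapse_eq_of_adj_of_le h.symm hx).symm
  right
  have hKa := add_one_mul K a
  rw [adj_iff] at h ⊢
  obtain ⟨hne, (⟨j, hj, i, hi, hjx, hjy⟩ | ⟨i, hi, hix, hiy⟩) | hbot⟩ := h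
  · rcases j with _ | j
    · rw [collapse_val_of_lt (by omega), collapse_val_of_lt (by omega)]
      exact ⟨by omega, Or.inl (Or.inl ⟨K, by omega, i, hi, by omega, by omega⟩)⟩
    · have hja := add_one_mul j a
      have hjK : (j + 1) * a + a ≤ (K + 1) * a := by nlinarith
      rw [collapse_val_of_le_of_lt (by omega) (by omega),
        collapse_val_of_le_of_lt (by omega) (by omega)]
      exact ⟨by omega, Or.inl (Or.inl ⟨j, by omega, i, hi, by omega, by omega⟩)⟩
  · rw [collapse_val_of_le_of_lt (by omega) (by omega),
      collapse_val_of_le_of_lt (by omega) (by omega)]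
    exact ⟨by omega, Or.inl (Or.inr ⟨i - a, by omega, by omega, by omega⟩)⟩
  · rw [collapse_val_of_le_of_lt (by omega) (by omega),
      collapse_val_of_le_of_lt (by omega) (by omega)]
    exact ⟨by omega, Or.inr (by omega)⟩

theorem reachable_shift_collapse (x : 𝕍[K + 1, a, b + 2 * a]) :
    𝕄[K + 1, a, b + 2 * a].Reachable x (shift (collapse x)) := by
  have hKa := add_one_mul K a
  have hx := val_lt x
  rcases lt_or_ge (x : ℕ) a with hxa | hxa
  · obtain ⟨x', hx'⟩ : ∃ v : 𝕍[K + 1, a, b + 2 * a], (v : ℕ) = (K + 1) * a + b + 2 * a - 1 - x :=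
      exists_val_eq (by omega)
    have e₁ : 𝕄[K + 1, a, b + 2 * a].Adj x x' := adj_iff.mpr ⟨by omega, Or.inr (by omega)⟩
    have e₂ : 𝕄[K + 1, a, b + 2 * a].Adj x' (shift (collapse x)) := by
      rw [adj_iff, shift_val, collapse_val_of_lt hxa]
      exact ⟨by omega, Or.inl (Or.inr ⟨b + 2 * a - 1 - x, by omega, by omega, by omega⟩)⟩
    exact e₁.reachable.trans e₂.reachable
  rcases lt_or_ge (x : ℕ) ((K + 1) * a + b + a) with hxb | hxb
  · rw [shift_collapse hxa hxb]
  · refine (adj_iff.mpr ?_).reachable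
    rw [shift_val, collapse_val_of_le hxb]
    exact ⟨by omega, Or.inl (Or.inr ⟨x - (K + 1) * a, by omega, by omega, by omega⟩)⟩

theorem ncard_neighborSet_shift (ha : 0 < a) (hEa : Even a) (hOb : Odd b)
    (v : 𝕍[K + 1, a, b]) :
    (𝕄[K + 1, a, b + 2 * a].neighborSet (shift v)).ncard = (𝕄[K + 1, a, b].neighborSet v).ncard := by
  rw [ncard_neighborSet ha (by omega) hEa (hOb.add_even (even_two_mul a)),
    ncard_neighborSet ha (by omega) hEa hOb, shift_val]
  exact if_congr (by omega) rfl rfl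

theorem ncard_neighborSet_of_notMem_range_shift (ha : 0 < a) (hEa : Even a) (hOb : Odd b)
    (x : 𝕍[K + 1, a, b + 2 * a]) (hx : x ∉ Set.range shift) :
    (𝕄[K + 1, a, b + 2 * a].neighborSet x).ncard = 2 := by
  have := val_lt x
  have hout : (x : ℕ) < a ∨ (K + 1) * a + b + a ≤ x := by
    by_contra! h
    exact hx ⟨collapse x, shift_collapse h.1 h.2⟩
  rw [ncard_neighborSet ha (by omega) hEa (hOb.add_even (even_two_mul a)), if_neg]
  omega

def reachEquiv (hEa : Even a) :
    SimpleGraph.ReachEquiv 𝕄[K + 1, a, b] 𝕄[K + 1, a, b + 2 * a] where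
  toFun := shift
  invFun := collapse
  reachable_toFun _ _ := reachable_shift_of_adj hEa
  reachable_invFun _ _ h := (collapse_eq_or_adj_of_adj h).elim (fun h => h ▸ .rfl) (·.reachable)
  left_inv := collapse_shift
  reachable_toFun_invFun := reachable_shift_collapse

end Meander

theorem meander_reduction_general (a b k : ℕ) (ha : 0 < a) (haeven : Even a)
    (hbodd : Odd b) (hk : 2 ≤ k) :
    numCycleComponents (meander (List.replicate (k - 1) a ++ [b])) =
      numCycleComponents (meander (List.replicate (k - 1) a ++ [b + 2 * a])) ∧
    numPathComponents (meander (List.replicate (k - 1) a ++ [b])) =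
      numPathComponents (meander (List.replicate (k - 1) a ++ [b + 2 * a])) ∧
    2 * numCycleComponents (meander (List.replicate (k - 1) a ++ [b])) +
        numPathComponents (meander (List.replicate (k - 1) a ++ [b])) - 1 =
      2 * numCycleComponents (meander (List.replicate (k - 1) a ++ [b + 2 * a])) +
        numPathComponents (meander (List.replicate (k - 1) a ++ [b + 2 * a])) - 1 := by
  obtain ⟨K, hK⟩ : ∃ K, k - 1 = K + 1 := ⟨k - 2, by omega⟩
  rw [hK]
  have hdeg := Meander.ncard_neighborSet_shift (K := K) ha haeven hbodd
  have hdeg₂ := Meander.ncard_neighborSet_of_notMem_range_shift (K := K) ha haeven hbodd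
  have hcyc := (Meander.reachEquiv haeven).numCycleComponents_eq hdeg hdeg₂
  have hpath := (Meander.reachEquiv haeven).numPathComponents_eq hdeg hdeg₂
  exact ⟨hcyc, hpath, by rw [hcyc, hpath]⟩

/-- Reduction lemma: for even `a` and odd `b`, the meander with `k` blocks
`a|a|⋯|a|b` and the meander `a|a|⋯|a|(b+2a)` with the same number of blocks have the
same number of cycle components and the same number of path components; in particular
they have the same index `2·#cycles + #paths - 1`. -/
theorem meander_reduction (a b k : ℕ) (ha : 0 < a) (haeven : Even a)
    (hb : 0 < b) (hbodd : Odd b) (hk : 2 ≤ k) :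
    numCycleComponents (meander (List.replicate (k - 1) a ++ [b])) =
      numCycleComponents (meander (List.replicate (k - 1) a ++ [b + 2 * a])) ∧
    numPathComponents (meander (List.replicate (k - 1) a ++ [b])) =
      numPathComponents (meander (List.replicate (k - 1) a ++ [b + 2 * a])) ∧
    2 * numCycleComponents (meander (List.replicate (k - 1) a ++ [b])) +
        numPathComponents (meander (List.replicate (k - 1) a ++ [b])) - 1 =
      2 * numCycleComponents (meander (List.replicate (k - 1) a ++ [b + 2 * a])) +
        numPathComponents (meander (List.replicate (k - 1) a ++ [b + 2 * a])) - 1 :=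
  meander_reduction_general a b k ha haeven hbodd hk
end

section
/- For every integer k ≥ 1, the meander of type 2|2|⋯|2|3 (with k top blocks of size 2 followed by one top block of size 3, on 2k+3 vertices) is Frobenius; that is, its meander graph is connected and acyclic. -/
/-!
Listing the vertices of the meander `2|⋯|2|3` as `2k+1, 1, 0, 2k+2, 2k, 2, 3, 2k-1, 2k-2, 4, 5, …`,
consecutive vertices are joined alternately by a bottom and a top edge, and every edge of the
meander joins two consecutive vertices of the list. Hence the position in the list is an
isomorphism onto the path graph, which is connected and acyclic.
-/

namespace SimpleGraph

theorem pathGraph_isAcyclic (n : ℕ) : (pathGraph n).IsAcyclic := by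
  -- a walk avoiding `s(u, u + 1)` cannot leave `Set.Iic u`
  have bridge {u v : Fin n} (huv : u.val + 1 = v.val) : (pathGraph n).IsBridge s(u, v) := by
    rw [isBridge_iff]
    rintro ⟨p⟩
    obtain ⟨d, -, hd, hd'⟩ := p.exists_boundary_dart (Set.Iic u) Set.self_mem_Iic
      (Set.notMem_Iic.2 (Fin.lt_def.2 (by omega)))
    obtain ⟨hadj, hne⟩ := deleteEdges_adj.1 d.adj
    simp only [Set.mem_Iic, Fin.le_def, not_le] at hd hd'
    have hd_eq : d.fst = u ∧ d.snd = v := by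
      rcases pathGraph_adj.1 hadj with h | h <;> constructor <;> ext <;> omega
    exact hne (by simp [hd_eq.1, hd_eq.2])
  refine isAcyclic_iff_forall_adj_isBridge.2 fun u v huv => ?_
  rcases pathGraph_adj.1 huv with h | h
  · exact bridge h
  · exact Sym2.eq_swap ▸ bridge h

end SimpleGraph

open SimpleGraph

theorem isFrobenius_of_iso_pathGraph {V : Type*} [Nonempty V] {G : SimpleGraph V} {n : ℕ}
    (e : G ≃g pathGraph n) : IsFrobenius G :=
  ⟨⟨e.preconnected_iff.2 (pathGraph_preconnected n)⟩, e.isAcyclic_iff.2 (pathGraph_isAcyclic n)⟩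

namespace MeanderTwosThree

variable {k : ℕ}

theorem sum_blocks : (List.replicate k 2 ++ [3]).sum = 2 * k + 3 := by
  simp [List.sum_replicate, mul_comm]

theorem sum_take_blocks {j : ℕ} (hj : j ≤ k) :
    ((List.replicate k 2 ++ [3]).take j).sum = 2 * j := by
  simp [List.take_append, List.take_replicate, Nat.min_eq_left hj, Nat.sub_eq_zero_of_le hj,
    mul_comm]

theorem lt_sum_blocks_iff {v : ℕ} : v < (List.replicate k 2 ++ [3]).sum ↔ v ≤ 2 * k + 2 := by
  rw [sum_blocks]; omega

theorem get_blocks {j : ℕ} (hj : j < (List.replicate k 2 ++ [3]).length) :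
    (List.replicate k 2 ++ [3]).get ⟨j, hj⟩ = if j < k then 2 else 3 := by
  simp [List.getElem_append]

theorem exists_block_iff {u v : ℕ} :
    (∃ K : Fin (List.replicate k 2 ++ [3]).length, ∃ i : ℕ,
      i < (List.replicate k 2 ++ [3]).get K ∧
      u = ((List.replicate k 2 ++ [3]).take K.val).sum + i ∧
      v = ((List.replicate k 2 ++ [3]).take K.val).sum +
        ((List.replicate k 2 ++ [3]).get K - 1 - i))
    ↔ (u / 2 = v / 2 ∧ u ≠ v ∧ u < 2 * k) ∨ (2 * k ≤ u ∧ 2 * k ≤ v ∧ u + v = 4 * k + 2) := by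
  have hlen : (List.replicate k 2 ++ [3]).length = k + 1 := by simp
  constructor
  · rintro ⟨⟨j, hj⟩, i, hi, rfl, rfl⟩
    simp only [get_blocks, sum_take_blocks (show j ≤ k by omega)] at hi ⊢
    split_ifs at hi ⊢ <;> omega
  · rintro (⟨huv, hne, hu⟩ | ⟨hu, hv, huv⟩)
    · refine ⟨⟨u / 2, by omega⟩, u % 2, ?_⟩
      simp only [get_blocks, sum_take_blocks (show u / 2 ≤ k by omega),
        if_pos (show u / 2 < k by omega)]
      omega
    · refine ⟨⟨k, by omega⟩, u - 2 * k, ?_⟩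
      simp only [get_blocks, sum_take_blocks le_rfl, if_neg (lt_irrefl k)]
      omega

-- top edges of the blocks `2`, top edges of the block `3`, bottom edges
def IsEdge (k u v : ℕ) : Prop :=
  u ≠ v ∧ ((u / 2 = v / 2 ∧ u < 2 * k) ∨ (2 * k ≤ u ∧ 2 * k ≤ v ∧ u + v = 4 * k + 2) ∨
    u + v = 2 * k + 2)

theorem meander_adj_iff {u v : Fin (List.replicate k 2 ++ [3]).sum} :
    (meander (List.replicate k 2 ++ [3])).Adj u v ↔ IsEdge k u v := by
  rw [meander, SimpleGraph.fromRel_adj, exists_block_iff, exists_block_iff, IsEdge, Ne, Fin.ext_iff]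
  have := sum_blocks (k := k)
  omega

/-- Past position `3`, positions `4m+1, 4m+2` hold the lower pair `2m, 2m+1` and positions
`4m+3, 4m+4` the upper pair `2k+1-2m, 2k-2m`. -/
def pathVertex (k i : ℕ) : ℕ :=
  if i = 0 then 2 * k + 1
  else if i = 1 then 1
  else if i = 2 then 0
  else if i = 3 then 2 * k + 2
  else if i % 4 = 1 ∨ i % 4 = 2 then i / 2
  else 2 * k + 2 - i / 2

def pathIndex (k v : ℕ) : ℕ :=
  if v = 2 * k + 1 then 0
  else if v = 1 then 1
  else if v = 0 then 2
  else if v = 2 * k + 2 then 3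
  else if v % 2 = 0 then (if v ≤ k then 2 * v + 1 else 4 * k + 4 - 2 * v)
  else (if v ≤ k + 1 then 2 * v else 4 * k + 5 - 2 * v)

theorem IsEdge.symm {u v : ℕ} (h : IsEdge k u v) : IsEdge k v u := by
  unfold IsEdge at *; omega

theorem pathIndex_le (hk : 1 ≤ k) {v : ℕ} (hv : v ≤ 2 * k + 2) : pathIndex k v ≤ 2 * k + 2 := by
  unfold pathIndex; split_ifs <;> omega

theorem pathVertex_pathIndex (hk : 1 ≤ k) {v : ℕ} (hv : v ≤ 2 * k + 2) :
    pathVertex k (pathIndex k v) = v := by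
  unfold pathIndex; split_ifs <;> unfold pathVertex <;> repeat' split
  all_goals omega

theorem isEdge_pathVertex_succ (hk : 1 ≤ k) {i : ℕ} (hi : i + 1 ≤ 2 * k + 2) :
    IsEdge k (pathVertex k i) (pathVertex k (i + 1)) := by
  unfold IsEdge pathVertex; repeat' split
  all_goals omega

theorem pathIndex_two_mul_adjacent {j : ℕ} (hj : j < k) :
    pathIndex k (2 * j) + 1 = pathIndex k (2 * j + 1) ∨
      pathIndex k (2 * j + 1) + 1 = pathIndex k (2 * j) := by
  unfold pathIndex; repeat' split
  all_goals omega

theorem pathIndex_sub_adjacent (hk : 1 ≤ k) {u : ℕ} (hu : u ≤ 2 * k + 2) (hne : u ≠ k + 1) :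
    pathIndex k u + 1 = pathIndex k (2 * k + 2 - u) ∨
      pathIndex k (2 * k + 2 - u) + 1 = pathIndex k u := by
  unfold pathIndex; repeat' split
  all_goals omega

theorem pathIndex_two_mul_self (hk : 1 ≤ k) : pathIndex k (2 * k) = 4 := by
  unfold pathIndex; split_ifs <;> omega

theorem pathIndex_two_mul_add_two : pathIndex k (2 * k + 2) = 3 := by
  unfold pathIndex; repeat' split
  all_goals omega

theorem pathIndex_adjacent_of_isEdge (hk : 1 ≤ k) {u v : ℕ} (h : IsEdge k u v) :
    pathIndex k u + 1 = pathIndex k v ∨ pathIndex k v + 1 = pathIndex k u := by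
  obtain ⟨hne, ⟨hdiv, hlt⟩ | ⟨hu, hv, hsum⟩ | hsum⟩ := h
  · obtain ⟨j, hj⟩ : ∃ j, j = u / 2 := ⟨_, rfl⟩
    have hpair := pathIndex_two_mul_adjacent (k := k) (j := j) (by omega)
    obtain rfl | rfl : u = 2 * j ∨ u = 2 * j + 1 := by omega
    all_goals obtain rfl | rfl : v = 2 * j ∨ v = 2 * j + 1 := by omega
    all_goals omega
  · obtain ⟨rfl, rfl⟩ | ⟨rfl, rfl⟩ : (u = 2 * k ∧ v = 2 * k + 2) ∨ (u = 2 * k + 2 ∧ v = 2 * k) := by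
      omega
    all_goals simp [pathIndex_two_mul_self hk, pathIndex_two_mul_add_two]
  · obtain rfl : v = 2 * k + 2 - u := by omega
    exact pathIndex_sub_adjacent hk (by omega) (by omega)

theorem isEdge_iff_pathIndex_adjacent (hk : 1 ≤ k) {u v : ℕ} (hu : u ≤ 2 * k + 2)
    (hv : v ≤ 2 * k + 2) :
    IsEdge k u v ↔ pathIndex k u + 1 = pathIndex k v ∨ pathIndex k v + 1 = pathIndex k u := by
  refine ⟨pathIndex_adjacent_of_isEdge hk, ?_⟩
  have hstep {u v : ℕ} (hv : v ≤ 2 * k + 2) (h : pathIndex k u + 1 = pathIndex k v) :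
      IsEdge k (pathVertex k (pathIndex k u)) (pathVertex k (pathIndex k v)) :=
    h ▸ isEdge_pathVertex_succ hk (h ▸ pathIndex_le hk hv)
  rintro (h | h)
  · simpa only [pathVertex_pathIndex hk hu, pathVertex_pathIndex hk hv] using hstep hv h
  · simpa only [pathVertex_pathIndex hk hu, pathVertex_pathIndex hk hv] using (hstep hu h).symm

noncomputable def pathIndexEquiv (hk : 1 ≤ k) :
    Fin (List.replicate k 2 ++ [3]).sum ≃ Fin (List.replicate k 2 ++ [3]).sum :=
  Equiv.ofBijective
    (fun v => ⟨pathIndex k v, lt_sum_blocks_iff.2 (pathIndex_le hk (lt_sum_blocks_iff.1 v.2))⟩)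
    (Finite.injective_iff_bijective.1 fun u v huv => Fin.ext <| by
      rw [← pathVertex_pathIndex hk (lt_sum_blocks_iff.1 u.2),
        ← pathVertex_pathIndex hk (lt_sum_blocks_iff.1 v.2)]
      exact congrArg (pathVertex k ∘ Fin.val) huv)

noncomputable def isoPathGraph (hk : 1 ≤ k) :
    meander (List.replicate k 2 ++ [3]) ≃g pathGraph (List.replicate k 2 ++ [3]).sum where
  toEquiv := pathIndexEquiv hk
  map_rel_iff' {u v} := by
    rw [pathGraph_adj, meander_adj_iff, isEdge_iff_pathIndex_adjacent hk
      (lt_sum_blocks_iff.1 u.2) (lt_sum_blocks_iff.1 v.2)]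
    rfl

end MeanderTwosThree

/-- The meander of type `2|2|⋯|2|3` (with `k ≥ 1` blocks of size 2 followed by one
block of size 3) is Frobenius. -/
theorem meander_twos_three_frobenius (k : ℕ) (hk : 1 ≤ k) :
    IsFrobenius (meander (List.replicate k 2 ++ [3])) :=
  have : Nonempty (Fin (List.replicate k 2 ++ [3]).sum) := ⟨⟨0, by simp⟩⟩
  isFrobenius_of_iso_pathGraph (MeanderTwosThree.isoPathGraph hk)
end
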